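/- Let m ≥ 1, n ≥ 1, let u : ℝᵐ × ℝⁿ → ℝ be Lipschitz, and let H ⊆ ℝⁿ be a polarizer, acting on the second factor of ℝᵐ × ℝⁿ. Then the polarization u^H is Lipschitz, and for every 1 ≤ s < ∞, ∫_{ℝᵐ×ℝⁿ} ‖Du^H‖^s dx = ∫_{ℝᵐ×ℝⁿ} ‖Du‖^s dx, where Du denotes the total (Fréchet) derivative, which exists Lebesgue-almost everywhere by Rademacher's theorem, and both integrals are taken in [0, ∞]. -/

import Mathlib

open MeasureTheory Metric
open scoped RealInnerProductSpace ENNReal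

noncomputable section

/-- Reflection of `ℝⁿ` across the hyperplane `{y : ⟨y, e⟩ = c}`. -/
def reflectHyp {n : ℕ} (e : EuclideanSpace ℝ (Fin n)) (c : ℝ)
    (y : EuclideanSpace ℝ (Fin n)) : EuclideanSpace ℝ (Fin n) :=
  y - (2 * (⟪y, e⟫ - c)) • e

/-- Polarization of `u : M × ℝⁿ → ℝ` with respect to the polarizer
`H = {y : ⟨y, e⟩ > c}`. -/
def polarize {M : Type*} {n : ℕ} (e : EuclideanSpace ℝ (Fin n)) (c : ℝ)
    (u : M × EuclideanSpace ℝ (Fin n) → ℝ)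
    (z : M × EuclideanSpace ℝ (Fin n)) : ℝ :=
  if c < ⟪z.2, e⟫ then max (u z) (u (z.1, reflectHyp e c z.2))
  else min (u z) (u (z.1, reflectHyp e c z.2))

/-! Let `T (x, y) = (x, σ y)` and `v = u ∘ T`. Above the hyperplane `u^H = max u v`, below it
`u^H = min u v`, and `u = v` on the hyperplane, so gluing along a segment that crosses it shows
that `u^H` keeps the Lipschitz constant of `u`.

Since `u^H ∘ T + u^H = u + v`, the set `S = {u^H = u}` is `T`-invariant, and `u^H = v` off `S`.
Off the (null) hyperplane, `u^H` touches `u` and `v` from one side only, so a.e. `Du^H = Du` on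
`S` and `Du^H = Dv` off `S`. As `‖Dv‖ = ‖Du‖ ∘ T` and `T` preserves Lebesgue measure, the
integral of `‖Du^H‖^s` over `Sᶜ` equals that of `‖Du‖^s`. -/

open Set Filter Topology

theorem LipschitzWith.ite_of_eq_on_level {E F : Type*} [NormedAddCommGroup E] [NormedSpace ℝ E]
    [PseudoMetricSpace F] {L : E → ℝ} (hL : Continuous L) (c : ℝ) {f g : E → F} {K : NNReal}
    (hf : LipschitzWith K f) (hg : LipschitzWith K g) (hfg : ∀ z, L z = c → f z = g z) :
    LipschitzWith K fun z => if c < L z then f z else g z := by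
  have mixed : ∀ z z', c < L z → ¬c < L z' → dist (f z) (g z') ≤ K * dist z z' := by
    intro z z' hz hz'
    obtain ⟨w, hw, hLw⟩ : ∃ w ∈ segment ℝ z z', L w = c :=
      (convex_segment z z').isPreconnected.intermediate_value (right_mem_segment ℝ z z')
        (left_mem_segment ℝ z z') hL.continuousOn ⟨not_lt.1 hz', hz.le⟩
    calc dist (f z) (g z') ≤ dist (f z) (f w) + dist (g w) (g z') := by
          rw [hfg w hLw]; exact dist_triangle _ _ _
      _ ≤ K * dist z w + K * dist w z' := add_le_add (hf.dist_le_mul _ _) (hg.dist_le_mul _ _)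
      _ = K * dist z z' := by rw [← mul_add, dist_add_dist_of_mem_segment hw]
  refine LipschitzWith.of_dist_le_mul fun z z' => ?_
  by_cases hz : c < L z <;> by_cases hz' : c < L z' <;> simp only [hz, hz', if_true, if_false]
  · exact hf.dist_le_mul z z'
  · exact mixed z z' hz hz'
  · rw [dist_comm, dist_comm z]; exact mixed z' z hz' hz
  · exact hg.dist_le_mul z z'

theorem Filter.EventuallyLE.fderiv_eq {E : Type*} [NormedAddCommGroup E] [NormedSpace ℝ E]
    {f g : E → ℝ} {z : E} (hle : f ≤ᶠ[𝓝 z] g) (heq : f z = g z)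
    (hf : DifferentiableAt ℝ f z) (hg : DifferentiableAt ℝ g z) :
    fderiv ℝ f z = fderiv ℝ g z := by
  have hmin : IsLocalMin (g - f) z := by
    filter_upwards [hle] with w hw
    simp only [Pi.sub_apply, heq, sub_self, sub_nonneg, hw]
  have := hmin.fderiv_eq_zero
  rwa [fderiv_sub hg hf, sub_eq_zero, eq_comm] at this

def LinearIsometryEquiv.prodCongr {R E E' F F' : Type*} [Semiring R] [SeminormedAddCommGroup E]
    [SeminormedAddCommGroup E'] [SeminormedAddCommGroup F] [SeminormedAddCommGroup F']
    [Module R E] [Module R E'] [Module R F] [Module R F']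
    (A : E ≃ₗᵢ[R] E') (B : F ≃ₗᵢ[R] F') : (E × F) ≃ₗᵢ[R] (E' × F') where
  toLinearEquiv := A.toLinearEquiv.prodCongr B.toLinearEquiv
  norm_map' z := by simp [Prod.norm_def]

theorem norm_fderiv_comp_linearIsometryEquiv_add {𝕜 E F : Type*} [NontriviallyNormedField 𝕜]
    [NormedAddCommGroup E] [NormedSpace 𝕜 E] [NormedAddCommGroup F] [NormedSpace 𝕜 F]
    (f : E → F) (A : E ≃ₗᵢ[𝕜] E) (b z : E) :
    ‖fderiv 𝕜 (fun z => f (A z + b)) z‖ = ‖fderiv 𝕜 f (A z + b)‖ := by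
  have : (fun z => f (A z + b)) = (fun y => f (y + b)) ∘ A.toContinuousLinearEquiv := rfl
  rw [this, ContinuousLinearEquiv.comp_right_fderiv, fderiv_comp_add_right]
  exact (fderiv 𝕜 f (A z + b)).opNorm_comp_linearIsometryEquiv A

theorem MeasureTheory.MeasurePreserving.lintegral_eq_of_invariant_set {α : Type*}
    [MeasurableSpace α] {μ : Measure α} {T : α → α} (hT : MeasurePreserving T μ μ)
    {S : Set α} (hS : MeasurableSet S) (hTS : T ⁻¹' S = S) {f g : α → ℝ≥0∞}
    (hf : Measurable f) (hgS : ∀ᵐ z ∂μ, z ∈ S → g z = f z)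
    (hgSc : ∀ᵐ z ∂μ, z ∉ S → g z = f (T z)) :
    ∫⁻ z, g z ∂μ = ∫⁻ z, f z ∂μ := by
  have hTSc : T ⁻¹' Sᶜ = Sᶜ := by rw [preimage_compl, hTS]
  calc ∫⁻ z, g z ∂μ = ∫⁻ z in S, g z ∂μ + ∫⁻ z in Sᶜ, g z ∂μ := (lintegral_add_compl g hS).symm
    _ = ∫⁻ z in S, f z ∂μ + ∫⁻ z in T ⁻¹' Sᶜ, f (T z) ∂μ := by
        rw [hTSc]
        congr 1
        · exact setLIntegral_congr_fun_ae hS hgS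
        · exact setLIntegral_congr_fun_ae hS.compl hgSc
    _ = ∫⁻ z, f z ∂μ := by
        rw [hT.setLIntegral_comp_preimage hS.compl hf, lintegral_add_compl f hS]

section Reflection

variable {n : ℕ} {e : EuclideanSpace ℝ (Fin n)} (c : ℝ)

theorem reflectHyp_eq_reflection_add (he : ‖e‖ = 1) (y : EuclideanSpace ℝ (Fin n)) :
    reflectHyp e c y = (ℝ ∙ e)ᗮ.reflection y + (2 * c) • e := by
  rw [Submodule.reflection_orthogonal_apply, Submodule.reflection_singleton_apply, he,
    reflectHyp, real_inner_comm]
  simp only [RCLike.ofReal_real_eq_id, id, one_pow, div_one, mul_sub, sub_smul]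
  module

theorem inner_reflectHyp (he : ‖e‖ = 1) (y : EuclideanSpace ℝ (Fin n)) :
    ⟪reflectHyp e c y, e⟫ = 2 * c - ⟪y, e⟫ := by
  rw [reflectHyp, inner_sub_left, real_inner_smul_left, real_inner_self_eq_norm_sq, he]
  ring

theorem reflectHyp_of_inner_eq {y : EuclideanSpace ℝ (Fin n)} (hy : ⟪y, e⟫ = c) :
    reflectHyp e c y = y := by
  simp [reflectHyp, hy]

theorem reflectHyp_involutive (he : ‖e‖ = 1) : Function.Involutive (reflectHyp e c) := by
  intro y
  rw [reflectHyp, inner_reflectHyp c he, reflectHyp]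
  module

theorem isometry_reflectHyp (he : ‖e‖ = 1) : Isometry (reflectHyp e c) := by
  rw [funext (reflectHyp_eq_reflection_add c he)]
  exact (isometry_add_right _).comp (Submodule.reflection _).isometry

theorem measurePreserving_reflectHyp (he : ‖e‖ = 1) :
    MeasurePreserving (reflectHyp e c) := by
  rw [funext (reflectHyp_eq_reflection_add c he)]
  exact (measurePreserving_add_right _ _).comp (Submodule.reflection _).measurePreserving

theorem volume_setOf_inner_eq (he : ‖e‖ = 1) :
    volume {y : EuclideanSpace ℝ (Fin n) | ⟪y, e⟫ = c} = 0 := by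
  have : {y : EuclideanSpace ℝ (Fin n) | ⟪y, e⟫ = c} = (· + -(c • e)) ⁻¹' (ℝ ∙ e)ᗮ := by
    ext y
    rw [mem_ofPred_eq, mem_preimage, SetLike.mem_coe,
      Submodule.mem_orthogonal_singleton_iff_inner_right, ← sub_eq_add_neg, inner_sub_right,
      real_inner_smul_right, real_inner_self_eq_norm_sq, he, real_inner_comm, sub_eq_zero]
    norm_num
  rw [this, measure_preimage_add_right]
  refine Measure.addHaar_submodule _ _ fun htop => ?_
  have : e ∈ (ℝ ∙ e)ᗮ := htop ▸ Submodule.mem_top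
  rw [Submodule.mem_orthogonal_singleton_iff_inner_right, real_inner_self_eq_norm_sq, he] at this
  norm_num at this

end Reflection

section Polarization

variable {M : Type*} {n : ℕ} {e : EuclideanSpace ℝ (Fin n)} (c : ℝ)
  {u : M × EuclideanSpace ℝ (Fin n) → ℝ}

def reflectSnd (e : EuclideanSpace ℝ (Fin n)) (c : ℝ) (z : M × EuclideanSpace ℝ (Fin n)) :
    M × EuclideanSpace ℝ (Fin n) :=
  (z.1, reflectHyp e c z.2)

theorem polarize_apply (z : M × EuclideanSpace ℝ (Fin n)) :
    polarize e c u z = if c < ⟪z.2, e⟫ then max (u z) (u (reflectSnd e c z))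
      else min (u z) (u (reflectSnd e c z)) :=
  rfl

theorem reflectSnd_of_inner_eq {z : M × EuclideanSpace ℝ (Fin n)} (hz : ⟪z.2, e⟫ = c) :
    reflectSnd e c z = z :=
  Prod.ext rfl (reflectHyp_of_inner_eq c hz)

theorem reflectSnd_involutive (he : ‖e‖ = 1) :
    Function.Involutive (reflectSnd (M := M) e c) := fun z => by
  simp only [reflectSnd, reflectHyp_involutive c he z.2]

theorem polarize_reflectSnd_add (he : ‖e‖ = 1) (z : M × EuclideanSpace ℝ (Fin n)) :
    polarize e c u (reflectSnd e c z) + polarize e c u z = u z + u (reflectSnd e c z) := by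
  have hinner : ⟪(reflectSnd e c z).2, e⟫ = 2 * c - ⟪z.2, e⟫ := inner_reflectHyp c he z.2
  simp only [polarize_apply, hinner, reflectSnd_involutive c he z]
  rcases lt_trichotomy ⟪z.2, e⟫ c with h | h | h
  · rw [if_pos (by linarith), if_neg (by linarith), max_comm, max_add_min]
  · rw [reflectSnd_of_inner_eq c h, if_neg (by linarith), if_neg (by linarith), min_self]
  · rw [if_neg (by linarith), if_pos (by linarith), min_comm, min_add_max]

theorem polarize_eq_or (z : M × EuclideanSpace ℝ (Fin n)) :
    polarize e c u z = u z ∨ polarize e c u z = u (reflectSnd e c z) := by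
  rw [polarize_apply]
  split_ifs
  exacts [max_choice _ _, min_choice _ _]

theorem preimage_reflectSnd_setOf_polarize_eq (he : ‖e‖ = 1) :
    reflectSnd e c ⁻¹' {z | polarize e c u z = u z} = {z | polarize e c u z = u z} := by
  ext z
  have := polarize_reflectSnd_add c (u := u) he z
  simp only [mem_preimage, mem_ofPred_eq]
  constructor <;> intro h <;> linarith

theorem isometry_reflectSnd [PseudoEMetricSpace M] (he : ‖e‖ = 1) :
    Isometry (reflectSnd (M := M) e c) :=
  isometry_id.prodMap (isometry_reflectHyp c he)

theorem LipschitzWith.comp_reflectSnd [PseudoEMetricSpace M] {K : NNReal}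
    (hu : LipschitzWith K u) (he : ‖e‖ = 1) : LipschitzWith K (u ∘ reflectSnd e c) := by
  simpa only [mul_one] using hu.comp (isometry_reflectSnd c he).lipschitz

section Metric

variable [NormedAddCommGroup M] [NormedSpace ℝ M]

theorem lipschitzWith_polarize {K : NNReal} (hu : LipschitzWith K u) (he : ‖e‖ = 1) :
    LipschitzWith K (polarize e c u) := by
  have hv := hu.comp_reflectSnd c he
  have hmax := LipschitzWith.max (f := u) (g := u ∘ reflectSnd e c) hu hv
  have hmin := LipschitzWith.min (f := u) (g := u ∘ reflectSnd e c) hu hv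
  rw [max_self] at hmax hmin
  exact (hmax.ite_of_eq_on_level (L := fun z => ⟪z.2, e⟫) (continuous_snd.inner continuous_const)
    c hmin fun z hz => by
      rw [Function.comp_apply, reflectSnd_of_inner_eq c hz, max_self, min_self] :)

theorem norm_fderiv_comp_reflectSnd (he : ‖e‖ = 1) (z : M × EuclideanSpace ℝ (Fin n)) :
    ‖fderiv ℝ (u ∘ reflectSnd e c) z‖ = ‖fderiv ℝ u (reflectSnd e c z)‖ := by
  have hT : reflectSnd e c =
      fun z => (LinearIsometryEquiv.refl ℝ M).prodCongr (ℝ ∙ e)ᗮ.reflection z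
        + (0, (2 * c) • e) := by
    funext z
    exact Prod.ext (add_zero _).symm (reflectHyp_eq_reflection_add c he z.2)
  rw [hT]
  exact norm_fderiv_comp_linearIsometryEquiv_add u _ _ z

theorem fderiv_polarize_eq_of_eq {g : M × EuclideanSpace ℝ (Fin n) → ℝ}
    (hmin : ∀ z, min (u z) (u (reflectSnd e c z)) ≤ g z)
    (hmax : ∀ z, g z ≤ max (u z) (u (reflectSnd e c z)))
    {z : M × EuclideanSpace ℝ (Fin n)} (hz : ⟪z.2, e⟫ ≠ c) (heq : polarize e c u z = g z)
    (hp : DifferentiableAt ℝ (polarize e c u) z) (hg : DifferentiableAt ℝ g z) :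
    fderiv ℝ (polarize e c u) z = fderiv ℝ g z := by
  have hinner : Continuous fun w : M × EuclideanSpace ℝ (Fin n) => ⟪w.2, e⟫ :=
    continuous_snd.inner continuous_const
  rcases hz.lt_or_gt with hlt | hgt
  · refine EventuallyLE.fderiv_eq ?_ heq hp hg
    filter_upwards [(isOpen_lt hinner continuous_const).mem_nhds hlt] with w hw
    rw [polarize_apply, if_neg (not_lt.2 (le_of_lt hw))]
    exact hmin w
  · refine (EventuallyLE.fderiv_eq ?_ heq.symm hg hp).symm
    filter_upwards [(isOpen_lt continuous_const hinner).mem_nhds hgt] with w hw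
    rw [polarize_apply, if_pos hw]
    exact hmax w

end Metric

section Measure

variable [MeasurableSpace M] {μ : Measure M}

theorem measurePreserving_reflectSnd [SFinite μ] (he : ‖e‖ = 1) :
    MeasurePreserving (reflectSnd e c) (μ.prod volume) (μ.prod volume) :=
  (MeasurePreserving.id μ).prod (measurePreserving_reflectHyp c he)

theorem ae_inner_snd_ne [SFinite μ] (he : ‖e‖ = 1) :
    ∀ᵐ z : M × EuclideanSpace ℝ (Fin n) ∂μ.prod volume, ⟪z.2, e⟫ ≠ c :=
  Measure.quasiMeasurePreserving_snd.ae <|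
    measure_eq_zero_iff_ae_notMem.1 (volume_setOf_inner_eq c he)

variable [NormedAddCommGroup M] [NormedSpace ℝ M] [FiniteDimensional ℝ M] [BorelSpace M]
  [μ.IsAddHaarMeasure]

theorem ae_fderiv_polarize {K : NNReal} (hu : LipschitzWith K u) (he : ‖e‖ = 1) :
    ∀ᵐ z ∂μ.prod volume,
      (polarize e c u z = u z → fderiv ℝ (polarize e c u) z = fderiv ℝ u z) ∧
      (polarize e c u z ≠ u z →
        ‖fderiv ℝ (polarize e c u) z‖ = ‖fderiv ℝ u (reflectSnd e c z)‖) := by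
  filter_upwards [hu.ae_differentiableAt, (hu.comp_reflectSnd c he).ae_differentiableAt,
    (lipschitzWith_polarize c hu he).ae_differentiableAt, ae_inner_snd_ne c he]
    with z hdu hdv hdp hz
  refine ⟨fun heq => fderiv_polarize_eq_of_eq c (fun _ => min_le_left _ _)
    (fun _ => le_max_left _ _) hz heq hdp hdu, fun hne => ?_⟩
  rw [fderiv_polarize_eq_of_eq c (g := u ∘ reflectSnd e c) (fun _ => min_le_right _ _)
    (fun _ => le_max_right _ _) hz ((polarize_eq_or c z).resolve_left hne) hdp hdv,
    norm_fderiv_comp_reflectSnd c he]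

theorem lintegral_norm_fderiv_polarize {K : NNReal} (hu : LipschitzWith K u) (he : ‖e‖ = 1)
    (s : ℝ) :
    ∫⁻ z, ENNReal.ofReal (‖fderiv ℝ (polarize e c u) z‖ ^ s) ∂μ.prod volume =
      ∫⁻ z, ENNReal.ofReal (‖fderiv ℝ u z‖ ^ s) ∂μ.prod volume := by
  have hp := lipschitzWith_polarize c hu he
  have hS : MeasurableSet {z | polarize e c u z = u z} :=
    measurableSet_eq_fun hp.continuous.measurable hu.continuous.measurable
  refine (measurePreserving_reflectSnd c he).lintegral_eq_of_invariant_set hS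
    (preimage_reflectSnd_setOf_polarize_eq c he)
    ((measurable_fderiv ℝ u).norm.pow_const s).ennreal_ofReal ?_ ?_
  · filter_upwards [ae_fderiv_polarize c hu he] with z hz heq
    rw [hz.1 heq]
  · filter_upwards [ae_fderiv_polarize c hu he] with z hz hne
    rw [hz.2 hne]

end Measure

end Polarization

theorem stmt_2_general {m n : ℕ}
    (u : EuclideanSpace ℝ (Fin m) × EuclideanSpace ℝ (Fin n) → ℝ)
    (K : NNReal) (hu : LipschitzWith K u)
    (e : EuclideanSpace ℝ (Fin n)) (he : ‖e‖ = 1) (c : ℝ) :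
    (∃ K' : NNReal, LipschitzWith K' (polarize e c u)) ∧
    (∀ s : ℝ, 1 ≤ s →
      ∫⁻ z, ENNReal.ofReal (‖fderiv ℝ (polarize e c u) z‖ ^ s) =
        ∫⁻ z, ENNReal.ofReal (‖fderiv ℝ u z‖ ^ s)) :=
  ⟨⟨K, lipschitzWith_polarize c hu he⟩, fun s _ => lintegral_norm_fderiv_polarize c hu he s⟩

/-- polarization of a Lipschitz function on `ℝᵐ × ℝⁿ` is Lipschitz and
preserves the `L^s`-integrals of the norm of the total derivative. -/
theorem stmt_2 {m n : ℕ} (hm : 1 ≤ m) (hn : 1 ≤ n)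
    (u : EuclideanSpace ℝ (Fin m) × EuclideanSpace ℝ (Fin n) → ℝ)
    (K : NNReal) (hu : LipschitzWith K u)
    (e : EuclideanSpace ℝ (Fin n)) (he : ‖e‖ = 1) (c : ℝ) :
    (∃ K' : NNReal, LipschitzWith K' (polarize e c u)) ∧
    (∀ s : ℝ, 1 ≤ s →
      ∫⁻ z, ENNReal.ofReal (‖fderiv ℝ (polarize e c u) z‖ ^ s) =
        ∫⁻ z, ENNReal.ofReal (‖fderiv ℝ u z‖ ^ s)) :=
  stmt_2_general u K hu e he c

end
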